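/- arXiv:2510.01693 — 10 statements merged into one kernel-verified Lean document; each statement's English description precedes it below -/
import Mathlib

section
/- Let p₀ be a choice model and let s* ∈ 𝕊 maximize V(·;p₀) over 𝕊, with π_S(s*) > 0. Let Ω be a nonempty finite set of choice models with p₀ ∈ Ω, and let ŝ ∈ 𝕊 be any maximizer over 𝕊 of the map s ↦ min_{p∈Ω} V(s;p). Then V(s*;p₀) − V(ŝ;p₀) ≤ max_{p∈Ω} ( V(s*;p₀) − V(s*;p) ) ≤ r_{s*} · √(8/π_S(s*)) · max_{p∈Ω} √(H²(p,p₀)), where r_{s*} = max_{a∈s*} r(s*,a). -/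
open Finset

/-- Squared Hellinger distance between two choice models at assortment `s`. -/
noncomputable def hsq (p₁ p₂ : Finset ℕ → ℕ → ℝ) (s : Finset ℕ) : ℝ :=
  (1 / 2) * ∑ a ∈ insert 0 s, (Real.sqrt (p₁ s a) - Real.sqrt (p₂ s a)) ^ 2

/-- Generalized squared Hellinger distance. -/
noncomputable def Hsq (𝕊 : Finset (Finset ℕ)) (π : Finset ℕ → ℝ)
    (p₁ p₂ : Finset ℕ → ℕ → ℝ) : ℝ :=
  ∑ s ∈ 𝕊, π s * hsq p₁ p₂ s

/-- `p` is a choice model over the assortment family `𝕊`. -/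
def IsChoiceModel (𝕊 : Finset (Finset ℕ)) (p : Finset ℕ → ℕ → ℝ) : Prop :=
  ∀ s ∈ 𝕊, (∀ a ∈ insert 0 s, 0 ≤ p s a) ∧ ∑ a ∈ insert 0 s, p s a = 1

/-- `𝕊` is a nonempty family of nonempty assortments of items `{1,…,N}`. -/
def IsAssortmentFamily (N : ℕ) (𝕊 : Finset (Finset ℕ)) : Prop :=
  𝕊.Nonempty ∧ ∀ s ∈ 𝕊, s.Nonempty ∧ s ⊆ Finset.Icc 1 N

/-- `π` is a probability mass function on `𝕊`. -/
def IsPMF (𝕊 : Finset (Finset ℕ)) (π : Finset ℕ → ℝ) : Prop :=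
  (∀ s, 0 ≤ π s) ∧ ∑ s ∈ 𝕊, π s = 1

/-- `r` is a valid revenue function on `𝕊`. -/
def IsRevenue (𝕊 : Finset (Finset ℕ)) (r : Finset ℕ → ℕ → ℝ) : Prop :=
  ∀ s ∈ 𝕊, (∀ a ∈ s, 0 ≤ r s a) ∧ r s 0 = 0

/-- Expected revenue of assortment `s` under choice model `p`. -/
noncomputable def Vrev (r : Finset ℕ → ℕ → ℝ) (p : Finset ℕ → ℕ → ℝ) (s : Finset ℕ) : ℝ :=
  ∑ a ∈ s, p s a * r s a

theorem stmt0 (N : ℕ) (𝕊 : Finset (Finset ℕ)) (π : Finset ℕ → ℝ)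
    (r : Finset ℕ → ℕ → ℝ) (p₀ : Finset ℕ → ℕ → ℝ)
    (Ω : Finset (Finset ℕ → ℕ → ℝ)) (hΩne : Ω.Nonempty)
    (hfam : IsAssortmentFamily N 𝕊) (hπ : IsPMF 𝕊 π) (hr : IsRevenue 𝕊 r)
    (hp₀ : IsChoiceModel 𝕊 p₀) (hΩcm : ∀ p ∈ Ω, IsChoiceModel 𝕊 p)
    (hp₀Ω : p₀ ∈ Ω)
    (sstar : Finset ℕ) (hsstar : sstar ∈ 𝕊)
    (hopt : ∀ s ∈ 𝕊, Vrev r p₀ s ≤ Vrev r p₀ sstar)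
    (hπpos : 0 < π sstar)
    (shat : Finset ℕ) (hshat : shat ∈ 𝕊)
    (hpess : ∀ s ∈ 𝕊, Ω.inf' hΩne (fun p => Vrev r p s) ≤ Ω.inf' hΩne (fun p => Vrev r p shat)) :
    Vrev r p₀ sstar - Vrev r p₀ shat ≤
        Ω.sup' hΩne (fun p => Vrev r p₀ sstar - Vrev r p sstar) ∧
    Ω.sup' hΩne (fun p => Vrev r p₀ sstar - Vrev r p sstar) ≤
        (sstar.sup' (hfam.2 sstar hsstar).1 (fun a => r sstar a)) * Real.sqrt (8 / π sstar) *
          Ω.sup' hΩne (fun p => Real.sqrt (Hsq 𝕊 π p p₀)) := by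
  obtain ⟨hp₀nn, hp₀sum⟩ := hp₀ sstar hsstar
  obtain ⟨hrnn, hr0⟩ := hr sstar hsstar
  have hsne := (hfam.2 sstar hsstar).1
  have hrmax_le : ∀ a ∈ sstar, r sstar a ≤ sstar.sup' hsne (fun a => r sstar a) :=
    fun a ha => Finset.le_sup' _ ha
  have hrmax_nn : 0 ≤ sstar.sup' hsne (fun a => r sstar a) := by
    obtain ⟨a, ha⟩ := hsne
    exact le_trans (hrnn a ha) (hrmax_le a ha)
  constructor
  · obtain ⟨q, hqΩ, hq⟩ := Ω.exists_mem_eq_inf' hΩne (fun p => Vrev r p sstar)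
    have h1 : Ω.inf' hΩne (fun p => Vrev r p shat) ≤ Vrev r p₀ shat :=
      Finset.inf'_le _ hp₀Ω
    have h2 := hpess sstar hsstar
    have h3 : Vrev r p₀ sstar - Vrev r q sstar ≤
        Ω.sup' hΩne (fun p => Vrev r p₀ sstar - Vrev r p sstar) :=
      Finset.le_sup' (fun p => Vrev r p₀ sstar - Vrev r p sstar) hqΩ
    rw [hq] at h2
    linarith
  · have key : ∀ p ∈ Ω, Vrev r p₀ sstar - Vrev r p sstar ≤
        (sstar.sup' hsne (fun a => r sstar a)) * Real.sqrt (8 / π sstar) *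
          Real.sqrt (Hsq 𝕊 π p p₀) := by
      intro p hpΩ
      obtain ⟨hpnn, hpsum⟩ := hΩcm p hpΩ sstar hsstar
      set T := insert 0 sstar with hT
      set S := ∑ a ∈ T, |p₀ sstar a - p sstar a| with hS
      have hSnn : 0 ≤ S := Finset.sum_nonneg fun a _ => abs_nonneg _
      -- Step A: V diff ≤ rmax * Σ_{a∈sstar} |p₀ - p|
      have stepA : Vrev r p₀ sstar - Vrev r p sstar ≤
          (sstar.sup' hsne (fun a => r sstar a)) * S := by
        have h1 : Vrev r p₀ sstar - Vrev r p sstar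
            = ∑ a ∈ sstar, (p₀ sstar a - p sstar a) * r sstar a := by
          simp [Vrev, ← Finset.sum_sub_distrib, sub_mul]
        rw [h1]
        have h2 : ∑ a ∈ sstar, (p₀ sstar a - p sstar a) * r sstar a ≤
            ∑ a ∈ sstar, |p₀ sstar a - p sstar a| * (sstar.sup' hsne (fun a => r sstar a)) := by
          apply Finset.sum_le_sum
          intro a ha
          calc (p₀ sstar a - p sstar a) * r sstar a
              ≤ |p₀ sstar a - p sstar a| * r sstar a :=
                mul_le_mul_of_nonneg_right (le_abs_self _) (hrnn a ha)
            _ ≤ _ := mul_le_mul_of_nonneg_left (hrmax_le a ha) (abs_nonneg _)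
        rw [← Finset.sum_mul] at h2
        refine h2.trans ?_
        rw [mul_comm]
        apply mul_le_mul_of_nonneg_left _ hrmax_nn
        exact Finset.sum_le_sum_of_subset_of_nonneg (Finset.subset_insert 0 sstar)
          (fun a _ _ => abs_nonneg _)
      -- Step C: S ≤ √(8 * hsq p p₀ sstar)
      have hhsq_nn : 0 ≤ hsq p p₀ sstar := by
        apply mul_nonneg (by norm_num)
        exact Finset.sum_nonneg fun a _ => sq_nonneg _
      have stepC : S ≤ Real.sqrt (8 * hsq p p₀ sstar) := by
        have heq : ∀ a ∈ T, |p₀ sstar a - p sstar a| =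
            |Real.sqrt (p sstar a) - Real.sqrt (p₀ sstar a)| *
              (Real.sqrt (p₀ sstar a) + Real.sqrt (p sstar a)) := by
          intro a ha
          rw [← abs_of_nonneg (add_nonneg (Real.sqrt_nonneg _) (Real.sqrt_nonneg _)),
            ← abs_mul, abs_sub_comm]
          congr 1
          have h1 := Real.sq_sqrt (hpnn a ha)
          have h2 := Real.sq_sqrt (hp₀nn a ha)
          linear_combination h2 - h1
        have hCS := Finset.sum_mul_sq_le_sq_mul_sq T
          (fun a => |Real.sqrt (p sstar a) - Real.sqrt (p₀ sstar a)|)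
          (fun a => Real.sqrt (p₀ sstar a) + Real.sqrt (p sstar a))
        have hf : ∑ a ∈ T, |Real.sqrt (p sstar a) - Real.sqrt (p₀ sstar a)| ^ 2
            = 2 * hsq p p₀ sstar := by
          simp only [sq_abs, hsq]
          ring
        have hg : ∑ a ∈ T, (Real.sqrt (p₀ sstar a) + Real.sqrt (p sstar a)) ^ 2 ≤ 4 := by
          have : ∀ a ∈ T, (Real.sqrt (p₀ sstar a) + Real.sqrt (p sstar a)) ^ 2 ≤
              2 * (p₀ sstar a + p sstar a) := by
            intro a ha
            have h₁ := Real.sq_sqrt (hp₀nn a ha)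
            have h₂ := Real.sq_sqrt (hpnn a ha)
            nlinarith [sq_nonneg (Real.sqrt (p₀ sstar a) - Real.sqrt (p sstar a))]
          calc ∑ a ∈ T, (Real.sqrt (p₀ sstar a) + Real.sqrt (p sstar a)) ^ 2
              ≤ ∑ a ∈ T, 2 * (p₀ sstar a + p sstar a) := Finset.sum_le_sum this
            _ = 4 := by
                rw [← Finset.mul_sum, Finset.sum_add_distrib, hp₀sum, hpsum]; norm_num
        have hS2 : S ^ 2 ≤ 8 * hsq p p₀ sstar := by
          have hSeq : S = ∑ a ∈ T, |Real.sqrt (p sstar a) - Real.sqrt (p₀ sstar a)| *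
              (Real.sqrt (p₀ sstar a) + Real.sqrt (p sstar a)) := Finset.sum_congr rfl heq
          rw [hSeq]
          calc (∑ a ∈ T, |Real.sqrt (p sstar a) - Real.sqrt (p₀ sstar a)| *
              (Real.sqrt (p₀ sstar a) + Real.sqrt (p sstar a))) ^ 2
              ≤ (∑ a ∈ T, |Real.sqrt (p sstar a) - Real.sqrt (p₀ sstar a)| ^ 2) *
                ∑ a ∈ T, (Real.sqrt (p₀ sstar a) + Real.sqrt (p sstar a)) ^ 2 := hCS
            _ ≤ (2 * hsq p p₀ sstar) * 4 := by
                rw [hf]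
                exact mul_le_mul_of_nonneg_left hg (by linarith)
            _ = 8 * hsq p p₀ sstar := by ring
        exact (Real.le_sqrt hSnn (by linarith)).mpr hS2
      -- Step D: hsq ≤ Hsq / π sstar
      have stepD : π sstar * hsq p p₀ sstar ≤ Hsq 𝕊 π p p₀ := by
        apply Finset.single_le_sum (f := fun s => π s * hsq p p₀ s) _ hsstar
        intro s _
        apply mul_nonneg (hπ.1 s)
        apply mul_nonneg (by norm_num)
        exact Finset.sum_nonneg fun a _ => sq_nonneg _
      have hsqrt8 : Real.sqrt (8 * hsq p p₀ sstar) ≤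
          Real.sqrt (8 / π sstar) * Real.sqrt (Hsq 𝕊 π p p₀) := by
        rw [← Real.sqrt_mul (by positivity)]
        apply Real.sqrt_le_sqrt
        rw [div_mul_eq_mul_div, le_div_iff₀ hπpos]
        nlinarith
      calc Vrev r p₀ sstar - Vrev r p sstar
          ≤ (sstar.sup' hsne (fun a => r sstar a)) * S := stepA
        _ ≤ (sstar.sup' hsne (fun a => r sstar a)) * (Real.sqrt (8 / π sstar) *
              Real.sqrt (Hsq 𝕊 π p p₀)) :=
            mul_le_mul_of_nonneg_left (stepC.trans hsqrt8) hrmax_nn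
        _ = _ := by ring
    apply Finset.sup'_le
    intro p hpΩ
    refine (key p hpΩ).trans ?_
    apply mul_le_mul_of_nonneg_left (Finset.le_sup' _ hpΩ)
    exact mul_nonneg hrmax_nn (Real.sqrt_nonneg _)
end

section
/- Let p₀ be a choice model and let s* ∈ 𝕊 maximize V(·;p₀) over 𝕊, with π_S(s*) > 0. Let Ω be a nonempty finite set of choice models such that p₀ ∈ Ω and H²(p,p₀) ≤ α for every p ∈ Ω, where α ≥ 0. Then any maximizer ŝ over 𝕊 of the map s ↦ min_{p∈Ω} V(s;p) satisfies V(s*;p₀) − V(ŝ;p₀) ≤ r_{s*} · √(8α/π_S(s*)), where r_{s*} = max_{a∈s*} r(s*,a). -/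
open Finset

/-- ℓ¹ distance of two pmfs is at most √(8·h²). -/
lemma l1_le_sqrt (t : Finset ℕ) (p q : ℕ → ℝ)
    (hp : ∀ a ∈ t, 0 ≤ p a) (hq : ∀ a ∈ t, 0 ≤ q a)
    (hps : ∑ a ∈ t, p a = 1) (hqs : ∑ a ∈ t, q a = 1) :
    ∑ a ∈ t, |p a - q a| ≤
      Real.sqrt (8 * ((1 / 2) * ∑ a ∈ t, (Real.sqrt (p a) - Real.sqrt (q a)) ^ 2)) := by
  set S1 : ℝ := ∑ a ∈ t, (Real.sqrt (p a) - Real.sqrt (q a)) ^ 2 with hS1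
  have hcs := Finset.sum_mul_sq_le_sq_mul_sq t
      (fun a => |Real.sqrt (p a) - Real.sqrt (q a)|)
      (fun a => |Real.sqrt (p a) + Real.sqrt (q a)|)
  have hrw : ∀ a ∈ t, |Real.sqrt (p a) - Real.sqrt (q a)| *
      |Real.sqrt (p a) + Real.sqrt (q a)| = |p a - q a| := by
    intro a ha
    rw [← abs_mul]
    congr 1
    have := Real.sq_sqrt (hp a ha)
    have := Real.sq_sqrt (hq a ha)
    ring_nf
    nlinarith [Real.sq_sqrt (hp a ha), Real.sq_sqrt (hq a ha)]
  rw [Finset.sum_congr rfl hrw] at hcs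
  have hS2 : ∑ a ∈ t, |Real.sqrt (p a) + Real.sqrt (q a)| ^ 2 ≤ 4 := by
    have : ∀ a ∈ t, |Real.sqrt (p a) + Real.sqrt (q a)| ^ 2 ≤ 2 * p a + 2 * q a := by
      intro a ha
      rw [sq_abs]
      nlinarith [Real.sq_sqrt (hp a ha), Real.sq_sqrt (hq a ha),
        sq_nonneg (Real.sqrt (p a) - Real.sqrt (q a))]
    calc ∑ a ∈ t, |Real.sqrt (p a) + Real.sqrt (q a)| ^ 2
        ≤ ∑ a ∈ t, (2 * p a + 2 * q a) := Finset.sum_le_sum this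
      _ = 4 := by rw [Finset.sum_add_distrib, ← Finset.mul_sum, ← Finset.mul_sum, hps, hqs]; ring
  have hS1nn : 0 ≤ S1 := Finset.sum_nonneg fun a _ => sq_nonneg _
  have hsq1 : ∀ a ∈ t, |Real.sqrt (p a) - Real.sqrt (q a)| ^ 2 =
      (Real.sqrt (p a) - Real.sqrt (q a)) ^ 2 := fun a _ => sq_abs _
  rw [Finset.sum_congr rfl hsq1, ← hS1] at hcs
  have hkey : (∑ a ∈ t, |p a - q a|) ^ 2 ≤ 8 * ((1 / 2) * S1) := by
    have := mul_le_mul_of_nonneg_left hS2 hS1nn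
    nlinarith
  have hnn : 0 ≤ ∑ a ∈ t, |p a - q a| := Finset.sum_nonneg fun a _ => abs_nonneg _
  calc ∑ a ∈ t, |p a - q a| = Real.sqrt ((∑ a ∈ t, |p a - q a|) ^ 2) := by
        rw [Real.sqrt_sq hnn]
    _ ≤ _ := Real.sqrt_le_sqrt hkey

theorem stmt1 (N : ℕ) (𝕊 : Finset (Finset ℕ)) (π : Finset ℕ → ℝ)
    (r : Finset ℕ → ℕ → ℝ) (p₀ : Finset ℕ → ℕ → ℝ)
    (Ω : Finset (Finset ℕ → ℕ → ℝ)) (hΩne : Ω.Nonempty)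
    (hfam : IsAssortmentFamily N 𝕊) (hπ : IsPMF 𝕊 π) (hr : IsRevenue 𝕊 r)
    (hp₀ : IsChoiceModel 𝕊 p₀) (hΩcm : ∀ p ∈ Ω, IsChoiceModel 𝕊 p)
    (hp₀Ω : p₀ ∈ Ω)
    (α : ℝ) (hα : 0 ≤ α) (hΩH : ∀ p ∈ Ω, Hsq 𝕊 π p p₀ ≤ α)
    (sstar : Finset ℕ) (hsstar : sstar ∈ 𝕊)
    (hopt : ∀ s ∈ 𝕊, Vrev r p₀ s ≤ Vrev r p₀ sstar)
    (hπpos : 0 < π sstar)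
    (shat : Finset ℕ) (hshat : shat ∈ 𝕊)
    (hpess : ∀ s ∈ 𝕊, Ω.inf' hΩne (fun p => Vrev r p s) ≤ Ω.inf' hΩne (fun p => Vrev r p shat)) :
    Vrev r p₀ sstar - Vrev r p₀ shat ≤
      (sstar.sup' (hfam.2 sstar hsstar).1 (fun a => r sstar a)) *
        Real.sqrt (8 * α / π sstar) := by
  set R : ℝ := sstar.sup' (hfam.2 sstar hsstar).1 (fun a => r sstar a) with hR
  obtain ⟨a₀, ha₀⟩ := (hfam.2 sstar hsstar).1
  have hRnn : 0 ≤ R := le_trans ((hr sstar hsstar).1 a₀ ha₀) (Finset.le_sup' _ ha₀)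
  obtain ⟨pm, hpmΩ, hpm⟩ := Finset.exists_mem_eq_inf' hΩne (fun p => Vrev r p sstar)
  -- chain: Vrev pm sstar ≤ inf' shat ≤ Vrev p₀ shat
  have h1 : Vrev r pm sstar ≤ Vrev r p₀ shat := by
    calc Vrev r pm sstar = Ω.inf' hΩne (fun p => Vrev r p sstar) := hpm.symm
      _ ≤ Ω.inf' hΩne (fun p => Vrev r p shat) := hpess sstar hsstar
      _ ≤ Vrev r p₀ shat := Finset.inf'_le _ hp₀Ω
  -- hellinger bound at sstar for pm
  have hhsq : hsq pm p₀ sstar ≤ α / π sstar := by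
    rw [le_div_iff₀ hπpos, mul_comm]
    calc π sstar * hsq pm p₀ sstar ≤ Hsq 𝕊 π pm p₀ := by
          apply Finset.single_le_sum (f := fun s => π s * hsq pm p₀ s) _ hsstar
          intro s _
          exact mul_nonneg (hπ.1 s) (by
            unfold hsq
            positivity)
      _ ≤ α := hΩH pm hpmΩ
  -- l1 bound
  have hcm := hΩcm pm hpmΩ sstar hsstar
  have hcm0 := hp₀ sstar hsstar
  have hl1 : ∑ a ∈ insert 0 sstar, |p₀ sstar a - pm sstar a| ≤
      Real.sqrt (8 * α / π sstar) := by
    have := l1_le_sqrt (insert 0 sstar) (p₀ sstar) (pm sstar)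
      hcm0.1 hcm.1 hcm0.2 hcm.2
    refine this.trans (Real.sqrt_le_sqrt ?_)
    have heq : (1 / 2 : ℝ) * ∑ a ∈ insert 0 sstar,
        (Real.sqrt (p₀ sstar a) - Real.sqrt (pm sstar a)) ^ 2 = hsq pm p₀ sstar := by
      unfold hsq
      congr 1
      apply Finset.sum_congr rfl
      intro a _
      ring
    rw [heq, mul_div_assoc]
    exact mul_le_mul_of_nonneg_left hhsq (by norm_num)
  -- revenue difference bound
  have h2 : Vrev r p₀ sstar - Vrev r pm sstar ≤ R * Real.sqrt (8 * α / π sstar) := by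
    unfold Vrev
    rw [← Finset.sum_sub_distrib]
    calc ∑ a ∈ sstar, (p₀ sstar a * r sstar a - pm sstar a * r sstar a)
        ≤ ∑ a ∈ sstar, |p₀ sstar a - pm sstar a| * R := by
          apply Finset.sum_le_sum
          intro a ha
          have hra : 0 ≤ r sstar a := (hr sstar hsstar).1 a ha
          have hrR : r sstar a ≤ R := Finset.le_sup' _ ha
          have : p₀ sstar a * r sstar a - pm sstar a * r sstar a
              = (p₀ sstar a - pm sstar a) * r sstar a := by ring
          rw [this]
          calc (p₀ sstar a - pm sstar a) * r sstar a
              ≤ |p₀ sstar a - pm sstar a| * r sstar a :=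
                mul_le_mul_of_nonneg_right (le_abs_self _) hra
            _ ≤ |p₀ sstar a - pm sstar a| * R :=
                mul_le_mul_of_nonneg_left hrR (abs_nonneg _)
      _ = R * ∑ a ∈ sstar, |p₀ sstar a - pm sstar a| := by
          rw [Finset.mul_sum]; apply Finset.sum_congr rfl; intro a _; ring
      _ ≤ R * ∑ a ∈ insert 0 sstar, |p₀ sstar a - pm sstar a| := by
          apply mul_le_mul_of_nonneg_left _ hRnn
          exact Finset.sum_le_sum_of_subset_of_nonneg (Finset.subset_insert _ _)
            (fun a _ _ => abs_nonneg _)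
      _ ≤ R * Real.sqrt (8 * α / π sstar) := mul_le_mul_of_nonneg_left hl1 hRnn
  linarith
end

section
/- Let φ : ℝ → ℝ be nonnegative and nonincreasing on (0,∞) and let n > 0. Suppose s₀ ∈ ℝ and σ₀ > 0 satisfy ∫_{σ₀²/2^{7+s₀/2}}^{σ₀} φ(u) du ≤ 2^{-(12+5s₀/2)} √n σ₀². Then for every real j ≥ 0, every s ≤ s₀ + j/5 and σ = 2^{j/2} σ₀ also satisfy ∫_{σ²/2^{7+s/2}}^{σ} φ(u) du ≤ 2^{-(12+5s/2)} √n σ². -/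
open MeasureTheory intervalIntegral

theorem stmt3 (φ : ℝ → ℝ)
    (hφ0 : ∀ u : ℝ, 0 < u → 0 ≤ φ u)
    (hφmono : ∀ u v : ℝ, 0 < u → u ≤ v → φ v ≤ φ u)
    (n : ℝ) (hn : 0 < n) (s₀ σ₀ : ℝ) (hσ₀ : 0 < σ₀)
    (hbase : ∫ u in σ₀ ^ 2 / (2 : ℝ) ^ (7 + s₀ / 2)..σ₀, φ u ≤
      (2 : ℝ) ^ (-(12 + 5 * s₀ / 2)) * Real.sqrt n * σ₀ ^ 2) :
    ∀ j : ℝ, 0 ≤ j → ∀ s : ℝ, s ≤ s₀ + j / 5 →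
      ∫ u in ((2 : ℝ) ^ (j / 2) * σ₀) ^ 2 / (2 : ℝ) ^ (7 + s / 2)..(2 : ℝ) ^ (j / 2) * σ₀, φ u ≤
        (2 : ℝ) ^ (-(12 + 5 * s / 2)) * Real.sqrt n * ((2 : ℝ) ^ (j / 2) * σ₀) ^ 2 := by
  intro j hj s hs
  have h2 : (0 : ℝ) < 2 := two_pos
  set c : ℝ := (2 : ℝ) ^ (j / 2) with hcdef
  have hc0 : 0 < c := Real.rpow_pos_of_pos h2 _
  have hcσ : 0 < c * σ₀ := mul_pos hc0 hσ₀
  set a : ℝ := (c * σ₀) ^ 2 / (2 : ℝ) ^ (7 + s / 2) with hadef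
  set a₀ : ℝ := σ₀ ^ 2 / (2 : ℝ) ^ (7 + s₀ / 2) with ha₀def
  have ha0 : 0 < a := div_pos (pow_pos hcσ 2) (Real.rpow_pos_of_pos h2 _)
  have ha₀0 : 0 < a₀ := div_pos (pow_pos hσ₀ 2) (Real.rpow_pos_of_pos h2 _)
  have hsqrt : 0 ≤ Real.sqrt n := Real.sqrt_nonneg n
  have hRHS : 0 ≤ (2 : ℝ) ^ (-(12 + 5 * s / 2)) * Real.sqrt n * (c * σ₀) ^ 2 := by
    positivity
  -- integrability of φ on positive intervals
  have hInt : ∀ x y : ℝ, 0 < x → 0 < y → IntervalIntegrable φ volume x y := by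
    intro x y hx hy
    apply AntitoneOn.intervalIntegrable
    intro u hu v hv huv
    rw [Set.mem_uIcc] at hu
    have hu0 : 0 < u := by
      rcases hu with h | h
      · exact lt_of_lt_of_le hx h.1
      · exact lt_of_lt_of_le hy h.1
    exact hφmono u v hu0 huv
  rcases le_or_gt (c * σ₀) a with hle | hlt
  · -- degenerate case: lower limit ≥ upper limit, integral ≤ 0
    have : ∫ u in a..(c * σ₀), φ u = -∫ u in (c * σ₀)..a, φ u :=
      (intervalIntegral.integral_symm _ _)
    rw [this]
    have hnn : 0 ≤ ∫ u in (c * σ₀)..a, φ u := by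
      apply intervalIntegral.integral_nonneg hle
      intro u hu
      exact hφ0 u (lt_of_lt_of_le hcσ hu.1)
    linarith
  · -- main case
    have hacσ : a / c < σ₀ := by
      rw [div_lt_iff₀ hc0, mul_comm]
      exact hlt
    have hac0 : 0 < a / c := div_pos ha0 hc0
    -- a / c = 2 ^ (j/2 - (7 + s/2)) * σ₀ ^ 2
    have hac_eq : a / c = (2 : ℝ) ^ (j / 2 - (7 + s / 2)) * σ₀ ^ 2 := by
      rw [hadef, mul_pow, Real.rpow_sub h2]
      have hc2 : c ^ 2 = c * c := sq c
      field_simp [hc2]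
      ring
    have ha₀_eq : a₀ = (2 : ℝ) ^ (-(7 + s₀ / 2)) * σ₀ ^ 2 := by
      rw [ha₀def, Real.rpow_neg (le_of_lt h2), div_eq_inv_mul]
    have ha₀ac : a₀ ≤ a / c := by
      rw [hac_eq, ha₀_eq]
      apply mul_le_mul_of_nonneg_right _ (le_of_lt (pow_pos hσ₀ 2))
      apply Real.rpow_le_rpow_left_iff (x := (2:ℝ)) one_lt_two |>.mpr
      linarith
    -- substitution
    have hsub : ∫ u in a..(c * σ₀), φ u = c * ∫ x in (a / c)..σ₀, φ (c * x) := by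
      rw [intervalIntegral.integral_comp_mul_left φ (ne_of_gt hc0),
        mul_div_cancel₀ _ (ne_of_gt hc0), smul_eq_mul, ← mul_assoc,
        mul_inv_cancel₀ (ne_of_gt hc0), one_mul]
    -- integrability of x ↦ φ (c * x)
    have hIntc : IntervalIntegrable (fun x => φ (c * x)) volume (a / c) σ₀ := by
      apply AntitoneOn.intervalIntegrable
      intro u hu v hv huv
      rw [Set.mem_uIcc] at hu
      have hu0 : 0 < u := by
        rcases hu with h | h
        · exact lt_of_lt_of_le hac0 h.1
        · exact lt_of_lt_of_le hσ₀ h.1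
      exact hφmono (c * u) (c * v) (mul_pos hc0 hu0) (by nlinarith)
    have hmono1 : ∫ x in (a / c)..σ₀, φ (c * x) ≤ ∫ x in (a / c)..σ₀, φ x := by
      apply intervalIntegral.integral_mono_on (le_of_lt hacσ) hIntc (hInt _ _ hac0 hσ₀)
      intro x hx
      have hx0 : 0 < x := lt_of_lt_of_le hac0 hx.1
      exact hφmono x (c * x) hx0 (le_mul_of_one_le_left (le_of_lt hx0)
        (Real.one_le_rpow one_le_two (by linarith) : (1:ℝ) ≤ c))
    have hmono2 : ∫ x in (a / c)..σ₀, φ x ≤ ∫ x in a₀..σ₀, φ x := by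
      have hadd : (∫ x in a₀..(a / c), φ x) + ∫ x in (a / c)..σ₀, φ x
          = ∫ x in a₀..σ₀, φ x :=
        intervalIntegral.integral_add_adjacent_intervals (hInt _ _ ha₀0 hac0)
          (hInt _ _ hac0 hσ₀)
      have hnn : 0 ≤ ∫ x in a₀..(a / c), φ x := by
        apply intervalIntegral.integral_nonneg ha₀ac
        intro u hu
        exact hφ0 u (lt_of_lt_of_le ha₀0 hu.1)
      linarith
    -- final arithmetic
    have hfin : c * ((2 : ℝ) ^ (-(12 + 5 * s₀ / 2)) * Real.sqrt n * σ₀ ^ 2)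
        ≤ (2 : ℝ) ^ (-(12 + 5 * s / 2)) * Real.sqrt n * (c * σ₀) ^ 2 := by
      have hcsq : (c * σ₀) ^ 2 = (2 : ℝ) ^ j * σ₀ ^ 2 := by
        rw [mul_pow, hcdef, ← Real.rpow_natCast ((2:ℝ) ^ (j/2)) 2,
          ← Real.rpow_mul (le_of_lt h2)]
        norm_num
      rw [hcsq, hcdef]
      have h1 : (2 : ℝ) ^ (j / 2) * ((2 : ℝ) ^ (-(12 + 5 * s₀ / 2)) * Real.sqrt n * σ₀ ^ 2)
          = (2 : ℝ) ^ (j / 2 + -(12 + 5 * s₀ / 2)) * (Real.sqrt n * σ₀ ^ 2) := by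
        rw [Real.rpow_add h2]; ring
      have h2' : (2 : ℝ) ^ (-(12 + 5 * s / 2)) * Real.sqrt n * ((2 : ℝ) ^ j * σ₀ ^ 2)
          = (2 : ℝ) ^ (-(12 + 5 * s / 2) + j) * (Real.sqrt n * σ₀ ^ 2) := by
        rw [Real.rpow_add h2]; ring
      rw [h1, h2']
      apply mul_le_mul_of_nonneg_right _ (by positivity)
      apply Real.rpow_le_rpow_left_iff (x := (2:ℝ)) one_lt_two |>.mpr
      linarith
    calc ∫ u in a..(c * σ₀), φ u = c * ∫ x in (a / c)..σ₀, φ (c * x) := hsub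
      _ ≤ c * ∫ x in a₀..σ₀, φ x :=
          mul_le_mul_of_nonneg_left (le_trans hmono1 hmono2) (le_of_lt hc0)
      _ ≤ c * ((2 : ℝ) ^ (-(12 + 5 * s₀ / 2)) * Real.sqrt n * σ₀ ^ 2) :=
          mul_le_mul_of_nonneg_left hbase (le_of_lt hc0)
      _ ≤ _ := hfin
end

section
/- Let A > 0 and C > 1. Then for every a with 0 ≤ a ≤ e^{-C/(2(C-1))} · A, one has ∫₀^a √(log(A/u)) du ≤ C · a · √(log(A/a)) (with both sides interpreted as 0 when a = 0). In particular, taking C = 2: for 0 ≤ a ≤ e^{-1} A, ∫₀^a √(log(A/u)) du ≤ 2a√(log(A/a)). -/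
open MeasureTheory

lemma sqrt_concave_bound' {x y : ℝ} (hx : 0 ≤ x) (hy : 0 < y) :
    Real.sqrt x ≤ Real.sqrt y + (x - y) / (2 * Real.sqrt y) := by
  have hsy : 0 < Real.sqrt y := Real.sqrt_pos.mpr hy
  rw [← sub_le_iff_le_add', le_div_iff₀ (by positivity)]
  nlinarith [Real.sq_sqrt hx, Real.sq_sqrt hy.le, Real.sqrt_nonneg x,
    sq_nonneg (Real.sqrt x - Real.sqrt y)]

lemma key_log_int_bound (A C : ℝ) (hA : 0 < A) (hC : 1 < C) (a : ℝ) (ha : 0 ≤ a)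
    (hle : a ≤ Real.exp (-C / (2 * (C - 1))) * A) :
    ∫ u in Set.Ioc (0 : ℝ) a, Real.sqrt (Real.log (A / u)) ≤
      C * a * Real.sqrt (Real.log (A / a)) := by
  rcases eq_or_lt_of_le ha with h0 | ha
  · simp [← h0]
  set s : ℝ := C / (2 * (C - 1)) with hs_def
  have hC1 : 0 < C - 1 := by linarith
  have hC0 : 0 < C := by linarith
  have hs : 0 < s := by positivity
  set L : ℝ := Real.log (A / a) with hL_def
  have hsL : s ≤ L := by
    rw [hL_def, Real.le_log_iff_exp_le (by positivity), le_div_iff₀ ha]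
    calc Real.exp s * a ≤ Real.exp s * (Real.exp (-s) * A) := by
          have hneg : -s = -C / (2 * (C - 1)) := by rw [hs_def]; ring
          exact mul_le_mul_of_nonneg_left (by rwa [hneg]) (Real.exp_nonneg s)
      _ = A := by rw [← mul_assoc, ← Real.exp_add]; simp
  have hL : 0 < L := lt_of_lt_of_le hs hsL
  set T : ℝ := Real.sqrt L with hT_def
  have hT : 0 < T := Real.sqrt_pos.mpr hL
  have hT2 : T ^ 2 = L := Real.sq_sqrt hL.le
  set ε : ℝ := 1 - 1 / C with hε_def
  have hε : 0 < ε := by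
    have : 1 / C < 1 := by rw [div_lt_one hC0]; linarith
    simp only [hε_def]; linarith
  have hε1 : ε < 1 := by
    have : 0 < 1 / C := by positivity
    simp only [hε_def]; linarith
  set c1 : ℝ := T - 1 / (2 * ε * T) with hc1_def
  set c2 : ℝ := a ^ ε / (2 * ε * T) with hc2_def
  have hptwise : ∀ u ∈ Set.Ioc (0 : ℝ) a,
      Real.sqrt (Real.log (A / u)) ≤ c1 + c2 * u ^ (-ε) := by
    intro u hu
    obtain ⟨hu0, hua⟩ := hu
    have hAu : L ≤ Real.log (A / u) := by
      apply Real.log_le_log (by positivity)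
      exact div_le_div_of_nonneg_left hA.le hu0 hua
    have hx : 0 ≤ Real.log (A / u) := le_trans hL.le hAu
    have step1 := sqrt_concave_bound' hx hL
    have hlog : Real.log (A / u) - L = Real.log (a / u) := by
      rw [hL_def, ← Real.log_div (by positivity) (by positivity)]
      congr 1
      field_simp
    have step2 : Real.log (a / u) ≤ ((a / u) ^ ε - 1) / ε := by
      rw [le_div_iff₀ hε]
      have h1 : Real.log ((a / u) ^ ε) ≤ (a / u) ^ ε - 1 :=
        Real.log_le_sub_one_of_pos (Real.rpow_pos_of_pos (by positivity) ε)
      rwa [Real.log_rpow (by positivity), mul_comm] at h1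
    have hrpow : (a / u) ^ ε = a ^ ε * u ^ (-ε) := by
      rw [Real.div_rpow ha.le hu0.le, Real.rpow_neg hu0.le, div_eq_mul_inv]
    calc Real.sqrt (Real.log (A / u))
        ≤ T + (Real.log (A / u) - L) / (2 * T) := step1
      _ = T + Real.log (a / u) / (2 * T) := by rw [hlog]
      _ ≤ T + (((a / u) ^ ε - 1) / ε) / (2 * T) := by gcongr
      _ = c1 + c2 * u ^ (-ε) := by
          rw [hrpow, hc1_def, hc2_def]
          field_simp
          ring
  have hint : IntervalIntegrable (fun u : ℝ => c1 + c2 * u ^ (-ε)) volume 0 a :=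
    intervalIntegrable_const.add
      ((intervalIntegral.intervalIntegrable_rpow' (by linarith)).const_mul c2)
  have hintOn : IntegrableOn (fun u : ℝ => c1 + c2 * u ^ (-ε)) (Set.Ioc 0 a) :=
    (intervalIntegrable_iff_integrableOn_Ioc_of_le ha.le).mp hint
  have hmono : ∫ u in Set.Ioc (0 : ℝ) a, Real.sqrt (Real.log (A / u)) ≤
      ∫ u in Set.Ioc (0 : ℝ) a, (c1 + c2 * u ^ (-ε)) := by
    apply integral_mono_of_nonneg
    · filter_upwards with u using Real.sqrt_nonneg _
    · exact hintOn
    · filter_upwards [ae_restrict_mem measurableSet_Ioc] with u hu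
      exact hptwise u hu
  have hcomp : ∫ u in Set.Ioc (0 : ℝ) a, (c1 + c2 * u ^ (-ε)) =
      c1 * a + c2 * (a ^ (1 - ε) / (1 - ε)) := by
    rw [← intervalIntegral.integral_of_le ha.le,
      intervalIntegral.integral_add intervalIntegrable_const
        ((intervalIntegral.intervalIntegrable_rpow' (by linarith)).const_mul c2),
      intervalIntegral.integral_const, intervalIntegral.integral_const_mul,
      integral_rpow (Or.inl (by linarith)),
      Real.zero_rpow (by linarith)]
    have : -ε + 1 = 1 - ε := by ring
    rw [this]
    simp [smul_eq_mul, mul_comm]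
  have haa : a ^ ε * a ^ (1 - ε) = a := by
    rw [← Real.rpow_add ha]
    simp
  have hterm : c2 * (a ^ (1 - ε) / (1 - ε)) = a / (2 * ε * T * (1 - ε)) := by
    rw [hc2_def, div_mul_div_comm, haa]
  have h2L : C ≤ 2 * (C - 1) * L := by
    rw [hs_def, div_le_iff₀ (by positivity)] at hsL
    linarith
  have hfin : c1 * a + a / (2 * ε * T * (1 - ε)) ≤ C * a * T := by
    have h1ε : (0:ℝ) < 1 - ε := by linarith
    have heq : c1 * a + a / (2 * ε * T * (1 - ε)) = a * T + C * a / (2 * T) := by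
      rw [hc1_def, hε_def]
      field_simp
      ring
    rw [heq]
    have hstep : C * a / (2 * T) ≤ (C - 1) * a * T := by
      rw [div_le_iff₀ (by positivity : (0:ℝ) < 2 * T)]
      have h3 : (C - 1) * a * T * (2 * T) = 2 * (C - 1) * L * a := by rw [← hT2]; ring
      have h4 : C * a ≤ 2 * (C - 1) * L * a := mul_le_mul_of_nonneg_right h2L ha.le
      linarith
    linarith
  calc ∫ u in Set.Ioc (0 : ℝ) a, Real.sqrt (Real.log (A / u))
      ≤ c1 * a + c2 * (a ^ (1 - ε) / (1 - ε)) := hcomp ▸ hmono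
    _ = c1 * a + a / (2 * ε * T * (1 - ε)) := by rw [hterm]
    _ ≤ C * a * T := hfin

theorem stmt4 (A C : ℝ) (hA : 0 < A) (hC : 1 < C) :
    (∀ a : ℝ, 0 ≤ a → a ≤ Real.exp (-C / (2 * (C - 1))) * A →
      ∫ u in Set.Ioc (0 : ℝ) a, Real.sqrt (Real.log (A / u)) ≤
        C * a * Real.sqrt (Real.log (A / a))) ∧
    (∀ a : ℝ, 0 ≤ a → a ≤ Real.exp (-1) * A →
      ∫ u in Set.Ioc (0 : ℝ) a, Real.sqrt (Real.log (A / u)) ≤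
        2 * a * Real.sqrt (Real.log (A / a))) := by
  constructor
  · exact fun a ha hle => key_log_int_bound A C hA hC a ha hle
  · intro a ha hle
    have h2 : (-2 : ℝ) / (2 * (2 - 1)) = -1 := by norm_num
    exact key_log_int_bound A 2 hA (by norm_num) a ha (by rwa [h2])
end

section
/- (i) For every real x with −1 < x ≤ 0, one has 2(1+x)² log(1+x) ≤ 2x + 3x². (ii) For every real x ≥ 0, one has 2(1+x) log(1+x) ≤ x² + 2x. -/
/-!
Write `y = 1 + x`. Both inequalities follow from classical rational bounds on `log y`:
for `y ≥ 1`, `log y ≤ sinh (log y) = (y - y⁻¹) / 2`, which is (ii) after multiplying by `2y`;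
for `0 < y ≤ 1`, `(y + 1) log y ≤ 2 (y - 1)`, read off the first term of the series
`log (1 + a⁻¹) = ∑ 2 / ((2k + 1) (2a + 1) ^ (2k + 1))` with `a = y / (1 - y)`, and then (i)
reduces to `x² ≥ 0`.
-/

namespace Real

lemma two_mul_log_le_sub_inv {y : ℝ} (hy : 1 ≤ y) : 2 * log y ≤ y - y⁻¹ := by
  have h := self_le_sinh_iff.mpr (log_nonneg hy)
  rw [sinh_log (by linarith)] at h
  linarith

lemma two_div_two_mul_add_one_le_log_one_add_inv {a : ℝ} (ha : 0 < a) :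
    2 / (2 * a + 1) ≤ log (1 + a⁻¹) := by
  have h := le_hasSum (hasSum_log_one_add_inv ha) 0 (fun k _ => by positivity)
  simpa [div_eq_mul_inv] using h

lemma add_one_mul_log_le_two_mul_sub_one {y : ℝ} (hy₀ : 0 < y) (hy₁ : y ≤ 1) :
    (y + 1) * log y ≤ 2 * (y - 1) := by
  rcases hy₁.eq_or_lt with rfl | hy₁
  · simp
  have h := two_div_two_mul_add_one_le_log_one_add_inv (a := y / (1 - y))
    (div_pos hy₀ (by linarith))
  have h_inv : 1 + (y / (1 - y))⁻¹ = y⁻¹ := by field_simp; ring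
  have h_rat : 2 / (2 * (y / (1 - y)) + 1) = 2 * (1 - y) / (y + 1) := by
    field_simp; ring
  rw [h_inv, h_rat, log_inv, div_le_iff₀ (by linarith)] at h
  linarith

end Real

open Real

theorem stmt6 :
    (∀ x : ℝ, -1 < x → x ≤ 0 →
      2 * (1 + x) ^ 2 * Real.log (1 + x) ≤ 2 * x + 3 * x ^ 2) ∧
    (∀ x : ℝ, 0 ≤ x →
      2 * (1 + x) * Real.log (1 + x) ≤ x ^ 2 + 2 * x) := by
  constructor
  · intro x hx₁ hx₀
    have hlog := add_one_mul_log_le_two_mul_sub_one (y := 1 + x) (by linarith) (by linarith)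
    nlinarith [sq_nonneg x, mul_le_mul_of_nonneg_left hlog (sq_nonneg (1 + x))]
  · intro x hx
    have hlog := two_mul_log_le_sub_inv (y := 1 + x) (by linarith)
    have h_sub : (1 + x) * ((1 + x) - (1 + x)⁻¹) = x ^ 2 + 2 * x := by
      field_simp; ring
    nlinarith [mul_le_mul_of_nonneg_left hlog (by linarith : (0 : ℝ) ≤ 1 + x)]
end

section
/- Let τ > 0 and let u be a real number with u ≤ τ. Then e^{|u|/2} − 1 − |u|/2 ≤ κ(τ) · (1 − e^{-u/2})²/2, where κ(τ) = 2(e^{τ/2} − 1 − τ/2)/(1 − e^{-τ/2})². -/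
/-!
Write `g x = exp x - 1 - x` and `h x = (1 - exp (-x)) ^ 2`, so that `κ τ = 2 g(τ/2) / h(τ/2)`.
For `0 < u` the claim is `g(u/2)/h(u/2) ≤ g(τ/2)/h(τ/2)`: the ratio `g / h` is increasing on
`(0, ∞)`, because the numerator of its derivative is `(1 - e⁻ᵗ) e⁻ᵗ ((eᵗ - 1)² - 2 g t) ≥ 0`.
For `u ≤ 0`, with `x = -u/2`, the claim follows from `2 g x ≤ (eˣ - 1)²` and `κ τ ≥ 1`.
-/

open Real Set

lemma two_mul_exp_sub_one_sub_le_sq {x : ℝ} (hx : 0 ≤ x) :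
    2 * (exp x - 1 - x) ≤ (exp x - 1) ^ 2 := by
  have hderiv (t : ℝ) : HasDerivAt (fun s ↦ (exp s - 1) ^ 2 - 2 * (exp s - 1 - s))
      (2 * (exp t - 1) ^ 2) t := by
    have hsub : HasDerivAt (fun s ↦ exp s - 1) (exp t) t := (hasDerivAt_exp t).sub_const 1
    exact ((hsub.pow 2).sub ((hsub.sub (hasDerivAt_id' t)).const_mul 2)).congr_deriv
      (by push_cast; ring)
  have hmono := monotone_of_hasDerivAt_nonneg hderiv fun t ↦ by positivity
  simpa using hmono hx

lemma one_sub_exp_neg_sq_le_two_mul {y : ℝ} (hy : 0 ≤ y) :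
    (1 - exp (-y)) ^ 2 ≤ 2 * (exp y - 1 - y) := by
  have h₁ : 0 ≤ 1 - exp (-y) := sub_nonneg.2 (exp_le_one_iff.2 (neg_nonpos.2 hy))
  have h₂ : 1 - exp (-y) ≤ y := by linarith [add_one_le_exp (-y)]
  nlinarith [quadratic_le_exp_of_nonneg hy]

lemma one_sub_exp_neg_pos {x : ℝ} (hx : 0 < x) : 0 < 1 - exp (-x) :=
  sub_pos.2 (exp_lt_one_iff.2 (neg_lt_zero.2 hx))

/-- For `τ ≠ 0`, the paper's `κ τ` equals `2 * kappaHalf (τ / 2)`. -/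
noncomputable def kappaHalf (x : ℝ) : ℝ := (exp x - 1 - x) / (1 - exp (-x)) ^ 2

lemma half_le_kappaHalf {y : ℝ} (hy : 0 < y) : 1 / 2 ≤ kappaHalf y := by
  have hpos := pow_pos (one_sub_exp_neg_pos hy) 2
  rw [kappaHalf, le_div_iff₀ hpos]
  linarith [one_sub_exp_neg_sq_le_two_mul hy.le]

lemma monotoneOn_kappaHalf : MonotoneOn kappaHalf (Ioi 0) := by
  have hderiv (t : ℝ) (ht : 0 < t) : HasDerivAt kappaHalf
      (((exp t - 1) * (1 - exp (-t)) ^ 2 - (exp t - 1 - t) * (2 * (1 - exp (-t)) * exp (-t))) /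
        ((1 - exp (-t)) ^ 2) ^ 2) t := by
    have hnum : HasDerivAt (fun s ↦ exp s - 1 - s) (exp t - 1) t :=
      ((hasDerivAt_exp t).sub_const 1).sub (hasDerivAt_id' t)
    have hden : HasDerivAt (fun s ↦ (1 - exp (-s)) ^ 2) (2 * (1 - exp (-t)) * exp (-t)) t := by
      have h := ((hasDerivAt_neg' t).exp.const_sub 1).pow 2
      exact h.congr_deriv (by push_cast; ring)
    exact hnum.div hden (pow_pos (one_sub_exp_neg_pos ht) 2).ne'
  refine monotoneOn_of_deriv_nonneg (convex_Ioi 0)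
    (fun t ht ↦ (hderiv t ht).continuousAt.continuousWithinAt)
    (fun t ht ↦ (hderiv t (interior_subset ht)).differentiableAt.differentiableWithinAt)
    fun t ht ↦ ?_
  rw [interior_Ioi] at ht
  rw [(hderiv t ht).deriv]
  have hfactor :
      (exp t - 1) * (1 - exp (-t)) ^ 2 - (exp t - 1 - t) * (2 * (1 - exp (-t)) * exp (-t)) =
        (1 - exp (-t)) * exp (-t) * ((exp t - 1) ^ 2 - 2 * (exp t - 1 - t)) := by
    have hab : exp t * exp (-t) = 1 := by rw [← exp_add, add_neg_cancel, exp_zero]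
    linear_combination (-(exp t - 1) * (1 - exp (-t))) * hab
  rw [hfactor]
  have hkey := two_mul_exp_sub_one_sub_le_sq ht.le
  have hpos := one_sub_exp_neg_pos ht
  positivity

lemma exp_sub_one_sub_le_kappaHalf_mul_one_sub_exp_sq {x y : ℝ} (hx : 0 ≤ x) (hy : 0 < y) :
    exp x - 1 - x ≤ kappaHalf y * (1 - exp x) ^ 2 := by
  nlinarith [two_mul_exp_sub_one_sub_le_sq hx, half_le_kappaHalf hy, sq_nonneg (1 - exp x)]

lemma exp_sub_one_sub_le_kappaHalf_mul_one_sub_exp_neg_sq {x y : ℝ} (hx : 0 < x) (hxy : x ≤ y) :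
    exp x - 1 - x ≤ kappaHalf y * (1 - exp (-x)) ^ 2 := by
  have hpos := pow_pos (one_sub_exp_neg_pos hx) 2
  calc exp x - 1 - x = kappaHalf x * (1 - exp (-x)) ^ 2 := by
        rw [kappaHalf, div_mul_cancel₀ _ hpos.ne']
    _ ≤ kappaHalf y * (1 - exp (-x)) ^ 2 := by
        gcongr
        exact monotoneOn_kappaHalf hx (hx.trans_le hxy) hxy

theorem stmt7 (τ u : ℝ) (hτ : 0 < τ) (hu : u ≤ τ) :
    Real.exp (|u| / 2) - 1 - |u| / 2 ≤
      (2 * (Real.exp (τ / 2) - 1 - τ / 2) / (1 - Real.exp (-τ / 2)) ^ 2) *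
        (1 - Real.exp (-u / 2)) ^ 2 / 2 := by
  have hκ : 2 * (exp (τ / 2) - 1 - τ / 2) / (1 - exp (-τ / 2)) ^ 2 * (1 - exp (-u / 2)) ^ 2 / 2
      = kappaHalf (τ / 2) * (1 - exp (-u / 2)) ^ 2 := by
    rw [kappaHalf, neg_div]
    ring
  rw [hκ]
  rcases le_or_gt u 0 with hu0 | hu0
  · rw [abs_of_nonpos hu0]
    exact exp_sub_one_sub_le_kappaHalf_mul_one_sub_exp_sq (by linarith) (by linarith)
  · rw [abs_of_pos hu0, neg_div]
    exact exp_sub_one_sub_le_kappaHalf_mul_one_sub_exp_neg_sq (by linarith) (by linarith)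
end

section
/- Let p₀ and p be choice models such that for every s ∈ 𝕊 with π_S(s) > 0 and every a ∈ s ∪ {0} with p₀(a|s) > 0 one has p(a|s) > 0 and log(p₀(a|s)/p(a|s)) ≤ τ, where τ > 0. Writing f(s,a) = log(p₀(a|s)/p(a|s)), it holds that Σ_{s∈𝕊} π_S(s) Σ_{a∈s∪{0}} p₀(a|s) · ( e^{|f(s,a)|/2} − 1 − |f(s,a)|/2 ) ≤ κ(τ) · H²(p,p₀), where κ(τ) = 2(e^{τ/2} − 1 − τ/2)/(1 − e^{-τ/2})². -/
open Finset

/-!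
Put `u = log (p₀/p) / 2 ≤ τ/2`, so that `p₀ = p e^{2u}` and the Hellinger term of `a` is
`p (e^u - 1)²`. The ratio of the left-hand term to it is `G(u) = (e^u - 1 - u)/(1 - e^{-u})²`
when `u > 0`, and at most `1/2` when `u ≤ 0`. Since `G ≥ 1/2` and `G` is increasing on
`(0, ∞)`, the ratio is at most `G(τ/2) = κ(τ)/2`. Both the bound for `u ≤ 0` and the
monotonicity of `G` come down to `e^v - 1 - v ≤ (e^v - 1)²/2` for `v ≥ 0`.
-/

section

open Real

lemma exp_sub_one_sub_le_half_sq {v : ℝ} (hv : 0 ≤ v) :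
    exp v - 1 - v ≤ (exp v - 1) ^ 2 / 2 := by
  have hderiv : ∀ x, HasDerivAt (fun x => (exp x - 1) ^ 2 / 2 - (exp x - 1 - x))
      ((exp x - 1) ^ 2) x := fun x =>
    ((((hasDerivAt_exp x).sub_const 1).pow 2).div_const 2 |>.sub
      (((hasDerivAt_exp x).sub_const 1).sub (hasDerivAt_id x))).congr_deriv (by simp; ring)
  have := monotone_of_hasDerivAt_nonneg hderiv (fun x => sq_nonneg _) hv
  simp only [exp_zero, sub_self] at this
  linarith

-- `κ(τ) = 2 * hellingerRatio (τ / 2)`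
noncomputable def hellingerRatio (t : ℝ) : ℝ := (exp t - 1 - t) / (1 - exp (-t)) ^ 2

lemma one_sub_exp_neg_pos_s8 {t : ℝ} (ht : 0 < t) : 0 < 1 - exp (-t) := by
  simpa using exp_lt_one_iff.mpr (neg_lt_zero.mpr ht)

lemma half_le_hellingerRatio {t : ℝ} (ht : 0 < t) : 1 / 2 ≤ hellingerRatio t := by
  have hD := one_sub_exp_neg_pos_s8 ht
  have hD_le : 1 - exp (-t) ≤ t := by linarith [one_sub_le_exp_neg t]
  rw [hellingerRatio, le_div_iff₀ (by positivity)]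
  nlinarith [quadratic_le_exp_of_nonneg ht.le]

lemma monotoneOn_hellingerRatio : MonotoneOn hellingerRatio (Set.Ioi 0) := by
  have hderiv : ∀ t ∈ Set.Ioi (0 : ℝ), HasDerivAt hellingerRatio
      (((exp t - 1) * (1 - exp (-t)) ^ 2 - (exp t - 1 - t) * (2 * (1 - exp (-t)) * exp (-t)))
        / ((1 - exp (-t)) ^ 2) ^ 2) t := by
    intro t ht
    have hnum := ((hasDerivAt_exp t).sub_const 1).sub (hasDerivAt_id t)
    have hden := ((hasDerivAt_neg t).exp.const_sub 1).pow 2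
    refine (hnum.div hden (pow_pos (one_sub_exp_neg_pos_s8 ht) 2).ne').congr_deriv ?_
    simp
  refine monotoneOn_of_hasDerivWithinAt_nonneg (convex_Ioi 0)
    (fun t ht => (hderiv t ht).continuousAt.continuousWithinAt)
    (fun t ht => (hderiv t (interior_subset ht)).hasDerivWithinAt) fun t ht => ?_
  rw [interior_Ioi] at ht
  have hD := one_sub_exp_neg_pos_s8 ht
  have hfactor :
      (exp t - 1) * (1 - exp (-t)) ^ 2 - (exp t - 1 - t) * (2 * (1 - exp (-t)) * exp (-t)) =
        2 * ((1 - exp (-t)) * exp (-t)) * ((exp t - 1) ^ 2 / 2 - (exp t - 1 - t)) := by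
    have hinv : exp t * exp (-t) = 1 := by rw [← exp_add, add_neg_cancel, exp_zero]
    linear_combination -(exp t - 1) * (1 - exp (-t)) * hinv
  rw [hfactor]
  have := exp_sub_one_sub_le_half_sq ht.le
  have := exp_pos (-t)
  positivity

lemma exp_sq_mul_exp_abs_sub_le {t u : ℝ} (ht : 0 < t) (hu : u ≤ t) :
    exp u ^ 2 * (exp |u| - 1 - |u|) ≤ hellingerRatio t * (exp u - 1) ^ 2 := by
  have hinv : exp u * exp (-u) = 1 := by rw [← exp_add, add_neg_cancel, exp_zero]
  rcases le_or_gt u 0 with hu0 | hu0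
  · rw [abs_of_nonpos hu0]
    calc exp u ^ 2 * (exp (-u) - 1 - -u) ≤ exp u ^ 2 * ((exp (-u) - 1) ^ 2 / 2) := by
          gcongr; exact exp_sub_one_sub_le_half_sq (neg_nonneg.mpr hu0)
      _ = (exp u - 1) ^ 2 / 2 := by
          linear_combination (exp u * exp (-u) - 2 * exp u + 1) / 2 * hinv
      _ ≤ hellingerRatio t * (exp u - 1) ^ 2 := by
          nlinarith [half_le_hellingerRatio ht, sq_nonneg (exp u - 1)]
  · rw [abs_of_pos hu0]
    have hD := one_sub_exp_neg_pos_s8 hu0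
    calc exp u ^ 2 * (exp u - 1 - u) = hellingerRatio u * (exp u - 1) ^ 2 := by
          have hsq_eq : (exp u - 1) ^ 2 = exp u ^ 2 * (1 - exp (-u)) ^ 2 := by
            linear_combination (2 * exp u - 1 - exp u * exp (-u)) * hinv
          rw [hsq_eq, hellingerRatio]
          field_simp
      _ ≤ hellingerRatio t * (exp u - 1) ^ 2 :=
          mul_le_mul_of_nonneg_right (monotoneOn_hellingerRatio hu0 (hu0.trans_le hu) hu)
            (sq_nonneg _)

lemma mul_exp_half_abs_log_div_le {τ q q₀ : ℝ} (hτ : 0 < τ) (hq : 0 ≤ q) (hq₀ : 0 ≤ q₀)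
    (hdom : 0 < q₀ → 0 < q ∧ log (q₀ / q) ≤ τ) :
    q₀ * (exp (|log (q₀ / q)| / 2) - 1 - |log (q₀ / q)| / 2) ≤
      hellingerRatio (τ / 2) * (√q - √q₀) ^ 2 := by
  rcases hq₀.eq_or_lt with rfl | hq₀_pos
  · simpa using mul_nonneg ((one_half_pos.trans_le (half_le_hellingerRatio (half_pos hτ))).le)
      (sq_nonneg (√q))
  obtain ⟨hq_pos, hlog⟩ := hdom hq₀_pos
  set u := log (q₀ / q) / 2
  have hq₀_eq : q₀ = q * exp u ^ 2 := by
    rw [← exp_nat_mul, show ((2 : ℕ) : ℝ) * u = log (q₀ / q) by simp [u]; ring,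
      exp_log (div_pos hq₀_pos hq_pos)]
    field_simp
  have hsqrt : √q₀ = √q * exp u := by rw [hq₀_eq, sqrt_mul hq, sqrt_sq (exp_pos u).le]
  have habs : |log (q₀ / q)| / 2 = |u| := by simp [u, abs_div]
  calc q₀ * (exp (|log (q₀ / q)| / 2) - 1 - |log (q₀ / q)| / 2)
      = q * (exp u ^ 2 * (exp |u| - 1 - |u|)) := by rw [habs, hq₀_eq]; ring
    _ ≤ q * (hellingerRatio (τ / 2) * (exp u - 1) ^ 2) :=
        mul_le_mul_of_nonneg_left
          (exp_sq_mul_exp_abs_sub_le (half_pos hτ) (by simp only [u]; linarith)) hq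
    _ = hellingerRatio (τ / 2) * (√q - √q₀) ^ 2 := by
        rw [hsqrt]
        linear_combination -(hellingerRatio (τ / 2) * (exp u - 1) ^ 2) * sq_sqrt hq

end

theorem stmt8_general (𝕊 : Finset (Finset ℕ)) (π : Finset ℕ → ℝ)
    (p₀ p : Finset ℕ → ℕ → ℝ) (τ : ℝ) (hτ : 0 < τ)
    (hπ : IsPMF 𝕊 π)
    (hp₀ : IsChoiceModel 𝕊 p₀) (hp : IsChoiceModel 𝕊 p)
    (hdom : ∀ s ∈ 𝕊, 0 < π s → ∀ a ∈ insert 0 s, 0 < p₀ s a →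
      0 < p s a ∧ Real.log (p₀ s a / p s a) ≤ τ) :
    ∑ s ∈ 𝕊, π s * ∑ a ∈ insert 0 s,
        p₀ s a * (Real.exp (|Real.log (p₀ s a / p s a)| / 2) - 1 -
          |Real.log (p₀ s a / p s a)| / 2) ≤
      (2 * (Real.exp (τ / 2) - 1 - τ / 2) / (1 - Real.exp (-τ / 2)) ^ 2) *
        Hsq 𝕊 π p p₀ := by
  have hκ : 2 * (Real.exp (τ / 2) - 1 - τ / 2) / (1 - Real.exp (-τ / 2)) ^ 2 =
      2 * hellingerRatio (τ / 2) := by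
    rw [hellingerRatio, neg_div]; ring
  rw [hκ, Hsq, mul_sum]
  refine sum_le_sum fun s hs => ?_
  rcases (hπ.1 s).eq_or_lt with hzero | hpos
  · simp [← hzero]
  calc π s * ∑ a ∈ insert 0 s,
        p₀ s a * (Real.exp (|Real.log (p₀ s a / p s a)| / 2) - 1 -
          |Real.log (p₀ s a / p s a)| / 2)
      ≤ π s * ∑ a ∈ insert 0 s, hellingerRatio (τ / 2) * (√(p s a) - √(p₀ s a)) ^ 2 :=
        mul_le_mul_of_nonneg_left (sum_le_sum fun a ha => mul_exp_half_abs_log_div_le hτ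
          ((hp s hs).1 a ha) ((hp₀ s hs).1 a ha) (hdom s hs hpos a ha)) hpos.le
    _ = 2 * hellingerRatio (τ / 2) * (π s * hsq p p₀ s) := by rw [hsq, ← mul_sum]; ring

theorem stmt8 (N : ℕ) (𝕊 : Finset (Finset ℕ)) (π : Finset ℕ → ℝ)
    (p₀ p : Finset ℕ → ℕ → ℝ) (τ : ℝ) (hτ : 0 < τ)
    (hfam : IsAssortmentFamily N 𝕊) (hπ : IsPMF 𝕊 π)
    (hp₀ : IsChoiceModel 𝕊 p₀) (hp : IsChoiceModel 𝕊 p)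
    (hdom : ∀ s ∈ 𝕊, 0 < π s → ∀ a ∈ insert 0 s, 0 < p₀ s a →
      0 < p s a ∧ Real.log (p₀ s a / p s a) ≤ τ) :
    ∑ s ∈ 𝕊, π s * ∑ a ∈ insert 0 s,
        p₀ s a * (Real.exp (|Real.log (p₀ s a / p s a)| / 2) - 1 -
          |Real.log (p₀ s a / p s a)| / 2) ≤
      (2 * (Real.exp (τ / 2) - 1 - τ / 2) / (1 - Real.exp (-τ / 2)) ^ 2) *
        Hsq 𝕊 π p p₀ :=
  stmt8_general 𝕊 π p₀ p τ hτ hπ hp₀ hp hdom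
end

section
/- Let p₁, p₂ ≥ 0 be reals that are not both zero, and let 0 ≤ λ < 1. Then |√((1−λ)p₁ + λp₂) − √p₂| ≤ √(1−λ) · |√p₁ − √p₂| and ((1−λ)/2) · |√p₁ − √p₂| ≤ |√((1−λ)p₁ + λp₂) − √p₂|. -/
theorem stmt11 (p₁ p₂ lam : ℝ) (hp₁ : 0 ≤ p₁) (hp₂ : 0 ≤ p₂)
    (hne : ¬(p₁ = 0 ∧ p₂ = 0)) (hlam0 : 0 ≤ lam) (hlam1 : lam < 1) :
    |Real.sqrt ((1 - lam) * p₁ + lam * p₂) - Real.sqrt p₂| ≤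
      Real.sqrt (1 - lam) * |Real.sqrt p₁ - Real.sqrt p₂| ∧
    ((1 - lam) / 2) * |Real.sqrt p₁ - Real.sqrt p₂| ≤
      |Real.sqrt ((1 - lam) * p₁ + lam * p₂) - Real.sqrt p₂| := by
  set a := Real.sqrt p₁ with ha
  set b := Real.sqrt p₂ with hb
  set m := Real.sqrt ((1 - lam) * p₁ + lam * p₂) with hm
  have hl : 0 ≤ 1 - lam := by linarith
  have hmn : 0 ≤ (1 - lam) * p₁ + lam * p₂ := by positivity
  have ha0 : 0 ≤ a := Real.sqrt_nonneg _
  have hb0 : 0 ≤ b := Real.sqrt_nonneg _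
  have hm0 : 0 ≤ m := Real.sqrt_nonneg _
  have ha2 : a ^ 2 = p₁ := Real.sq_sqrt hp₁
  have hb2 : b ^ 2 = p₂ := Real.sq_sqrt hp₂
  have hm2 : m ^ 2 = (1 - lam) * p₁ + lam * p₂ := Real.sq_sqrt hmn
  have hpos : 0 < m + b := by
    rcases lt_or_eq_of_le hm0 with h | h
    · linarith
    rcases lt_or_eq_of_le hb0 with h' | h'
    · linarith
    exfalso
    have hp2 : p₂ = 0 := by nlinarith
    have hp1 : p₁ = 0 := by nlinarith
    exact hne ⟨hp1, hp2⟩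
  have h1 : (m - b) * (m + b) = (1 - lam) * ((a - b) * (a + b)) := by
    linear_combination hm2 - hb2 - (1 - lam) * ha2 + (1 - lam) * hb2
  have key : |m - b| * (m + b) = (1 - lam) * (|a - b| * (a + b)) := by
    rw [show |m - b| * (m + b) = |(m - b) * (m + b)| by
      rw [abs_mul, abs_of_nonneg hpos.le], h1, abs_mul, abs_mul,
      abs_of_nonneg hl, abs_of_nonneg (add_nonneg ha0 hb0)]
  have hs2 : Real.sqrt (1 - lam) ^ 2 = 1 - lam := Real.sq_sqrt hl
  have hsm : Real.sqrt (1 - lam) * a ≤ m := by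
    rw [ha, ← Real.sqrt_mul hl]
    exact Real.sqrt_le_sqrt (by nlinarith)
  have hsb : Real.sqrt (1 - lam) * b ≤ b := by
    have h1' : Real.sqrt (1 - lam) ≤ 1 := Real.sqrt_le_one.mpr (by linarith)
    nlinarith
  have hmle : m ≤ 2 * a + b := by
    nlinarith [hm2, ha2, hb2]
  constructor
  · have h2 : |m - b| * (m + b) ≤ Real.sqrt (1 - lam) * |a - b| * (m + b) := by
      rw [key]
      have c0 : 0 ≤ Real.sqrt (1 - lam) * |a - b| :=
        mul_nonneg (Real.sqrt_nonneg _) (abs_nonneg _)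
      calc (1 - lam) * (|a - b| * (a + b))
          = Real.sqrt (1 - lam) * |a - b| *
            (Real.sqrt (1 - lam) * a + Real.sqrt (1 - lam) * b) := by
            linear_combination (-(|a - b| * (a + b))) * hs2
        _ ≤ Real.sqrt (1 - lam) * |a - b| * (m + b) :=
            mul_le_mul_of_nonneg_left (add_le_add hsm hsb) c0
    exact le_of_mul_le_mul_right h2 hpos
  · have h2 : (1 - lam) / 2 * |a - b| * (m + b) ≤ |m - b| * (m + b) := by
      rw [key]
      have c0 : 0 ≤ (1 - lam) / 2 * |a - b| :=
        mul_nonneg (by linarith) (abs_nonneg _)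
      calc (1 - lam) / 2 * |a - b| * (m + b)
          ≤ (1 - lam) / 2 * |a - b| * (2 * (a + b)) :=
            mul_le_mul_of_nonneg_left (by linarith) c0
        _ = (1 - lam) * (|a - b| * (a + b)) := by ring
    exact le_of_mul_le_mul_right h2 hpos
end

section
/- Let A be a nonempty finite set and let q, p : A → ℝ be probability mass functions on A (nonnegative, summing to 1). Assume p(a) > 0 whenever q(a) > 0. Then Σ_{a∈A} (√(p(a)) − √(q(a)))² ≤ Σ_{a∈A, q(a)>0} q(a) · log(q(a)/p(a)). Equivalently, writing h²(p,q) = (1/2) Σ_{a∈A} (√p(a) − √q(a))² and KL(q‖p) = Σ_{a: q(a)>0} q(a) log(q(a)/p(a)), one has 2 h²(p,q) ≤ KL(q‖p). -/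
/-!
With `t = √p / √q`, the inequality `log t ≤ t - 1` gives the pointwise bound
`2q - 2√p√q ≤ q log (q / p)` wherever `q > 0`. Summing over the support of `q` yields
`2 - 2 ∑ √p√q ≤ KL(q‖p)`, and the left-hand side is exactly `∑ (√p - √q)²` since both
`p` and `q` have total mass one.
-/

open Finset
open scoped Classical

theorem two_mul_sub_two_mul_sqrt_mul_sqrt_le_mul_log {p q : ℝ} (hp : 0 < p) (hq : 0 < q) :
    2 * q - 2 * (√p * √q) ≤ q * Real.log (q / p) := by
  have hsq : 0 < √q := Real.sqrt_pos.mpr hq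
  have hlog : Real.log (√p / √q) ≤ √p / √q - 1 :=
    Real.log_le_sub_one_of_pos (div_pos (Real.sqrt_pos.mpr hp) hsq)
  have hlog_div : Real.log (q / p) = -2 * Real.log (√p / √q) := by
    rw [Real.log_div hq.ne' hp.ne', Real.log_div (Real.sqrt_pos.mpr hp).ne' hsq.ne',
      Real.log_sqrt hp.le, Real.log_sqrt hq.le]
    ring
  have hq_eq : q * (√p / √q) = √p * √q := by
    nth_rewrite 1 [← Real.mul_self_sqrt hq.le]
    field_simp
  rw [hlog_div]
  nlinarith [mul_le_mul_of_nonneg_left hlog hq.le]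

theorem sum_sq_sqrt_sub_sqrt {ι : Type*} (s : Finset ι) {p q : ι → ℝ}
    (hp : ∀ i ∈ s, 0 ≤ p i) (hq : ∀ i ∈ s, 0 ≤ q i) :
    ∑ i ∈ s, (√(p i) - √(q i)) ^ 2 = ∑ i ∈ s, p i + ∑ i ∈ s, q i - 2 * ∑ i ∈ s, √(p i) * √(q i) := by
  rw [mul_sum, ← sum_add_distrib, ← sum_sub_distrib]
  refine sum_congr rfl fun i hi => ?_
  rw [sub_sq, Real.sq_sqrt (hp i hi), Real.sq_sqrt (hq i hi)]
  ring

theorem stmt12_general {A : Type*} [Fintype A] (q p : A → ℝ)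
    (hq0 : ∀ a, 0 ≤ q a) (hp0 : ∀ a, 0 ≤ p a)
    (hqsum : ∑ a, q a = 1) (hpsum : ∑ a, p a = 1)
    (hqp : ∀ a, 0 < q a → 0 < p a) :
    ∑ a, (Real.sqrt (p a) - Real.sqrt (q a)) ^ 2 ≤
      ∑ a ∈ Finset.univ.filter (fun a => 0 < q a), q a * Real.log (q a / p a) := by
  have hsupp : ∀ {f : A → ℝ}, (∀ a, q a = 0 → f a = 0) →
      ∑ a ∈ univ.filter (fun a => 0 < q a), f a = ∑ a, f a := fun hf =>
    sum_filter_of_ne fun a _ hfa => (hq0 a).lt_of_ne fun h => hfa (hf a h.symm)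
  calc ∑ a, (√(p a) - √(q a)) ^ 2 = 2 * ∑ a, q a - 2 * ∑ a, √(p a) * √(q a) := by
        rw [sum_sq_sqrt_sub_sqrt _ (fun a _ => hp0 a) (fun a _ => hq0 a), hpsum, hqsum]
        ring
    _ = ∑ a ∈ univ.filter (fun a => 0 < q a), (2 * q a - 2 * (√(p a) * √(q a))) := by
        rw [hsupp fun a h => by simp [h], sum_sub_distrib, mul_sum, mul_sum]
    _ ≤ _ := sum_le_sum fun a ha =>
        two_mul_sub_two_mul_sqrt_mul_sqrt_le_mul_log (hqp a (mem_filter.mp ha).2)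
          (mem_filter.mp ha).2

theorem stmt12 {A : Type*} [Fintype A] [Nonempty A] (q p : A → ℝ)
    (hq0 : ∀ a, 0 ≤ q a) (hp0 : ∀ a, 0 ≤ p a)
    (hqsum : ∑ a, q a = 1) (hpsum : ∑ a, p a = 1)
    (hqp : ∀ a, 0 < q a → 0 < p a) :
    ∑ a, (Real.sqrt (p a) - Real.sqrt (q a)) ^ 2 ≤
      ∑ a ∈ Finset.univ.filter (fun a => 0 < q a), q a * Real.log (q a / p a) :=
  stmt12_general q p hq0 hp0 hqsum hpsum hqp
end

section
/- Let a, b ∈ ℝ and set p = 1/(1 + e^{-a}) and p' = 1/(1 + e^{-b}). Then the Kullback–Leibler divergence between the corresponding Bernoulli distributions satisfies p·log(p/p') + (1−p)·log((1−p)/(1−p')) ≤ (a − b)². -/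
/-!
With `p = σ(a)` for the logistic function `σ`, the Bernoulli KL divergence equals the Bregman
divergence `L(b) - L(a) - σ(a) (b - a)` of the softplus function `L(t) = log (1 + eᵗ)`, whose
derivative is `σ`. Since `σ' = σ (1 - σ) ≤ 1/4`, the mean value inequality bounds this Bregman
divergence by `(b - a)² / 4`.
-/

open Real

lemma sigmoid_mul_one_sub_sigmoid_le (x : ℝ) : sigmoid x * (1 - sigmoid x) ≤ 1 / 4 := by
  nlinarith [sq_nonneg (sigmoid x - 1 / 2)]

lemma abs_sigmoid_sub_sigmoid_le (x y : ℝ) : |sigmoid x - sigmoid y| ≤ |x - y| / 4 := by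
  have bound : ∀ t ∈ Set.univ, ‖sigmoid t * (1 - sigmoid t)‖ ≤ 1 / 4 := fun t _ => by
    rw [norm_of_nonneg (mul_nonneg (sigmoid_nonneg t) (sub_nonneg.2 (sigmoid_le_one t)))]
    exact sigmoid_mul_one_sub_sigmoid_le t
  have := convex_univ.norm_image_sub_le_of_norm_hasDerivWithin_le
    (fun t _ => (hasDerivAt_sigmoid t).hasDerivWithinAt) bound (Set.mem_univ y) (Set.mem_univ x)
  simp only [Real.norm_eq_abs] at this
  linarith

lemma hasDerivAt_log_one_add_exp (t : ℝ) :
    HasDerivAt (fun t => log (1 + exp t)) (sigmoid t) t := by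
  convert ((hasDerivAt_exp t).const_add 1).log (by positivity) using 1
  rw [sigmoid_def, exp_neg]
  field_simp
  ring

lemma log_one_add_exp_sub_sub_le (a b : ℝ) :
    log (1 + exp b) - log (1 + exp a) - sigmoid a * (b - a) ≤ (b - a) ^ 2 / 4 := by
  set g : ℝ → ℝ := fun t => log (1 + exp t) - sigmoid a * t
  have hg : ∀ t ∈ Set.uIcc a b, HasDerivWithinAt g (sigmoid t - sigmoid a) (Set.uIcc a b) t :=
    fun t _ => ((hasDerivAt_log_one_add_exp t).sub
      ((hasDerivAt_id t).const_mul (sigmoid a)) |>.hasDerivWithinAt).congr_deriv (by simp)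
  have bound : ∀ t ∈ Set.uIcc a b, ‖sigmoid t - sigmoid a‖ ≤ |b - a| / 4 := fun t ht => by
    rw [Real.norm_eq_abs]
    linarith [abs_sigmoid_sub_sigmoid_le t a, Set.abs_sub_left_of_mem_uIcc ht]
  have := (convex_uIcc a b).norm_image_sub_le_of_norm_hasDerivWithin_le hg bound
    Set.left_mem_uIcc Set.right_mem_uIcc
  rw [Real.norm_eq_abs, Real.norm_eq_abs] at this
  calc log (1 + exp b) - log (1 + exp a) - sigmoid a * (b - a) = g b - g a := by ring
    _ ≤ |b - a| / 4 * |b - a| := (le_abs_self _).trans this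
    _ = (b - a) ^ 2 / 4 := by rw [div_mul_eq_mul_div, abs_mul_abs_self, sq]

lemma log_one_sub_sigmoid (t : ℝ) : log (1 - sigmoid t) = -log (1 + exp t) := by
  rw [← sigmoid_neg, sigmoid_def, neg_neg, log_inv]

lemma log_sigmoid (t : ℝ) : log (sigmoid t) = t - log (1 + exp t) := by
  have : sigmoid t = sigmoid (-t) * exp t := by
    rw [← sigmoid_mul_rexp_neg, mul_assoc, ← exp_add, neg_add_cancel, exp_zero, mul_one]
  rw [this, log_mul (sigmoid_pos _).ne' (exp_pos t).ne', log_exp, sigmoid_neg, log_one_sub_sigmoid]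
  ring

lemma bernoulli_kl_sigmoid_eq (a b : ℝ) :
    sigmoid a * log (sigmoid a / sigmoid b) +
        (1 - sigmoid a) * log ((1 - sigmoid a) / (1 - sigmoid b)) =
      log (1 + exp b) - log (1 + exp a) - sigmoid a * (b - a) := by
  have h1 (t : ℝ) : 1 - sigmoid t ≠ 0 := sub_ne_zero.2 (sigmoid_lt_one t).ne'
  rw [log_div (sigmoid_pos a).ne' (sigmoid_pos b).ne', log_div (h1 a) (h1 b),
    log_sigmoid, log_sigmoid, log_one_sub_sigmoid, log_one_sub_sigmoid]
  ring

theorem stmt13 (a b : ℝ) :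
    (1 / (1 + Real.exp (-a))) * Real.log ((1 / (1 + Real.exp (-a))) / (1 / (1 + Real.exp (-b)))) +
        (1 - 1 / (1 + Real.exp (-a))) *
          Real.log ((1 - 1 / (1 + Real.exp (-a))) / (1 - 1 / (1 + Real.exp (-b)))) ≤
      (a - b) ^ 2 := by
  simp only [one_div, ← sigmoid_def]
  rw [bernoulli_kl_sigmoid_eq]
  nlinarith [log_one_add_exp_sub_sub_le a b, sq_nonneg (a - b)]
end
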